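/- arXiv:1203.1432 — 4 statements merged into one kernel-verified Lean document; each statement's English description precedes it below -/
import Mathlib

section
/- A W-hyperbolic space (X,d,W) is uniquely geodesic if and only if it is strictly convex, i.e., for any distinct x, y ∈ X and any λ ∈ (0,1) the point W(x,y,λ) is the unique z ∈ X satisfying d(x,z) = λd(x,y) and d(y,z) = (1-λ)d(x,y). -/
/-!
For `x ≠ y`, axioms (W1) and (W2) make `l ↦ W x y l` a constant-speed parametrization of a
geodesic segment from `x` to `y`, and every point of any geodesic segment from `x` to `y` lies at
distances `l d(x,y)` and `(1 - l) d(x,y)` from `x` and `y` for some `l ∈ [0,1]`. Under strict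
convexity these points are exactly the `W x y l`, so every geodesic segment is the `W`-segment.
Conversely, a point `z` at such distances lies on the concatenation of the `W`-segments from
`x` to `z` and from `z` to `y`, which is a geodesic segment from `x` to `y` because
`d(x,z) + d(z,y) = d(x,y)`; by uniqueness it is the `W`-segment, so `z = W x y l`.
-/

open Metric Set

/-- A geodesic segment in a metric space joining `x` and `y`: the image of an
isometric embedding of a real interval sending the endpoints to `x` and `y`. -/
def IsGeodesicSegment {X : Type*} [MetricSpace X] (S : Set X) (x y : X) : Prop :=
  ∃ (a b : ℝ) (γ : ℝ → X), a ≤ b ∧ γ a = x ∧ γ b = y ∧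
    (∀ s ∈ Set.Icc a b, ∀ t ∈ Set.Icc a b, dist (γ s) (γ t) = |s - t|) ∧
    S = γ '' Set.Icc a b

/-- A metric space is geodesic if every two points are joined by a geodesic segment. -/
def GeodesicSpace (X : Type*) [MetricSpace X] : Prop :=
  ∀ x y : X, ∃ S : Set X, IsGeodesicSegment S x y

/-- `(X,d,W)` is a W-hyperbolic space: the convexity mapping `W` satisfies
axioms (W1)-(W4) for all parameters in `[0,1]`. -/
def IsWHyperbolic {X : Type*} [MetricSpace X] (W : X → X → ℝ → X) : Prop :=
  (∀ x y z : X, ∀ l ∈ Set.Icc (0:ℝ) 1,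
      dist z (W x y l) ≤ (1 - l) * dist z x + l * dist z y) ∧
  (∀ x y : X, ∀ l ∈ Set.Icc (0:ℝ) 1, ∀ l' ∈ Set.Icc (0:ℝ) 1,
      dist (W x y l) (W x y l') = |l - l'| * dist x y) ∧
  (∀ x y : X, ∀ l ∈ Set.Icc (0:ℝ) 1, W x y l = W y x (1 - l)) ∧
  (∀ x y z w : X, ∀ l ∈ Set.Icc (0:ℝ) 1,
      dist (W x z l) (W y w l) ≤ (1 - l) * dist x y + l * dist z w)

section

variable {X : Type*} [MetricSpace X]

def IsometricOn (γ : ℝ → X) (I : Set ℝ) : Prop :=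
  ∀ s ∈ I, ∀ t ∈ I, dist (γ s) (γ t) = |s - t|

lemma isometricOn_of_le {γ : ℝ → X} {I : Set ℝ}
    (h : ∀ s ∈ I, ∀ t ∈ I, s ≤ t → dist (γ s) (γ t) = t - s) : IsometricOn γ I := by
  intro s hs t ht
  rcases le_total s t with hst | hts
  · rw [h s hs t ht hst, abs_sub_comm, abs_of_nonneg (sub_nonneg.2 hst)]
  · rw [dist_comm, h t ht s hs hts, abs_of_nonneg (sub_nonneg.2 hts)]

namespace IsometricOn

variable {γ δ : ℝ → X} {I : Set ℝ}

lemma dist_eq_sub (h : IsometricOn γ I) {s t : ℝ} (hs : s ∈ I) (ht : t ∈ I) (hst : s ≤ t) :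
    dist (γ s) (γ t) = t - s := by
  rw [h s hs t ht, abs_sub_comm, abs_of_nonneg (sub_nonneg.2 hst)]

lemma congr (h : IsometricOn γ I) (hδ : EqOn δ γ I) : IsometricOn δ I := by
  intro s hs t ht
  rw [hδ hs, hδ ht, h s hs t ht]

lemma comp_add_const (h : IsometricOn γ I) (e : ℝ) :
    IsometricOn (fun t => γ (t + e)) ((· + e) ⁻¹' I) := by
  intro s hs t ht
  rw [h _ hs _ ht, add_sub_add_right_eq_sub]

lemma Icc_union_Icc {a m c : ℝ} (ham : a ≤ m) (hmc : m ≤ c) (h₁ : IsometricOn γ (Icc a m))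
    (h₂ : IsometricOn γ (Icc m c)) (hac : dist (γ a) (γ c) = c - a) :
    IsometricOn γ (Icc a c) := by
  refine isometricOn_of_le fun s hs t ht hst => ?_
  by_cases htm : t ≤ m
  · exact h₁.dist_eq_sub ⟨hs.1, hst.trans htm⟩ ⟨ht.1, htm⟩ hst
  by_cases hsm : m ≤ s
  · exact h₂.dist_eq_sub ⟨hsm, hs.2⟩ ⟨hsm.trans hst, ht.2⟩ hst
  rw [not_le] at htm hsm
  have hsm' : s ∈ Icc a m := ⟨hs.1, hsm.le⟩
  have htm' : t ∈ Icc m c := ⟨htm.le, ht.2⟩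
  have hupper : dist (γ s) (γ t) ≤ (m - s) + (t - m) := by
    rw [← h₁.dist_eq_sub hsm' (right_mem_Icc.2 ham) hsm.le,
      ← h₂.dist_eq_sub (left_mem_Icc.2 hmc) htm' htm.le]
    exact dist_triangle _ _ _
  have hlower : c - a ≤ (s - a) + dist (γ s) (γ t) + (c - t) := by
    rw [← hac, ← h₁.dist_eq_sub (left_mem_Icc.2 ham) hsm' hs.1,
      ← h₂.dist_eq_sub htm' (right_mem_Icc.2 hmc) ht.2]
    exact dist_triangle4 _ _ _ _
  linarith

end IsometricOn

end

namespace IsGeodesicSegment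

variable {X : Type*} [MetricSpace X] {S S₁ S₂ : Set X} {x y z : X}

lemma exists_isometricOn (h : IsGeodesicSegment S x y) :
    ∃ (a b : ℝ) (γ : ℝ → X), a ≤ b ∧ γ a = x ∧ γ b = y ∧ IsometricOn γ (Icc a b) ∧
      S = γ '' Icc a b ∧ dist x y = b - a := by
  obtain ⟨a, b, γ, hab, rfl, rfl, hγ, rfl⟩ := h
  exact ⟨a, b, γ, hab, rfl, rfl, hγ, rfl,
    IsometricOn.dist_eq_sub hγ (left_mem_Icc.2 hab) (right_mem_Icc.2 hab) hab⟩

lemma union (h₁ : IsGeodesicSegment S₁ x z) (h₂ : IsGeodesicSegment S₂ z y)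
    (hz : dist x z + dist z y = dist x y) : IsGeodesicSegment (S₁ ∪ S₂) x y := by
  obtain ⟨a₁, b₁, γ₁, hab₁, rfl, hγ₁z, hγ₁, rfl, hd₁⟩ := h₁.exists_isometricOn
  obtain ⟨a₂, b₂, γ₂, hab₂, hγ₂z, rfl, hγ₂, rfl, hd₂⟩ := h₂.exists_isometricOn
  set e := a₂ - b₁
  have hIcc₂ : (· + e) ⁻¹' Icc a₂ b₂ = Icc b₁ (b₂ - e) := by
    rw [preimage_add_const_Icc, sub_sub_cancel]
  have hb : b₁ ≤ b₂ - e := by linarith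
  set γ : ℝ → X := fun t => if t ≤ b₁ then γ₁ t else γ₂ (t + e)
  have hγ_left : EqOn γ γ₁ (Icc a₁ b₁) := fun t ht => if_pos ht.2
  have hγ_right : EqOn γ (fun t => γ₂ (t + e)) (Icc b₁ (b₂ - e)) := by
    intro t ht
    rcases ht.1.eq_or_lt with rfl | hlt
    · simp only [γ, le_refl, if_true, e, add_sub_cancel, hγ₁z, hγ₂z]
    · exact if_neg (not_le.2 hlt)
  have hγ_end : γ (b₂ - e) = γ₂ b₂ :=
    (hγ_right (right_mem_Icc.2 hb)).trans (congrArg γ₂ (sub_add_cancel b₂ e))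
  have hγ₂' := hγ₂.comp_add_const e
  rw [hIcc₂] at hγ₂'
  refine ⟨a₁, b₂ - e, γ, hab₁.trans hb, hγ_left (left_mem_Icc.2 hab₁), hγ_end, ?_, ?_⟩
  · refine (hγ₁.congr hγ_left).Icc_union_Icc hab₁ hb (hγ₂'.congr hγ_right) ?_
    rw [hγ_left (left_mem_Icc.2 hab₁), hγ_end, ← hz, hd₁, hd₂]
    ring
  · rw [← Icc_union_Icc_eq_Icc hab₁ hb, image_union, hγ_left.image_eq, hγ_right.image_eq,
      ← hIcc₂, ← image_image γ₂ (· + e), image_preimage_eq _ (add_right_surjective e)]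

lemma exists_mem_dist_eq (h : IsGeodesicSegment S x y) {l : ℝ} (hl : l ∈ Icc (0 : ℝ) 1) :
    ∃ p ∈ S, dist x p = l * dist x y ∧ dist y p = (1 - l) * dist x y := by
  obtain ⟨a, b, γ, hab, rfl, rfl, hγ, rfl, hd⟩ := h.exists_isometricOn
  have ht : a + l * (b - a) ∈ Icc a b := ⟨by nlinarith [hl.1], by nlinarith [hl.2]⟩
  refine ⟨γ (a + l * (b - a)), mem_image_of_mem γ ht, ?_, ?_⟩
  · rw [hγ.dist_eq_sub (left_mem_Icc.2 hab) ht ht.1, hd]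
    ring
  · rw [dist_comm, hγ.dist_eq_sub ht (right_mem_Icc.2 hab) ht.2, hd]
    ring

lemma exists_dist_eq_of_mem (h : IsGeodesicSegment S x y) (hxy : x ≠ y) {p : X} (hp : p ∈ S) :
    ∃ l ∈ Icc (0 : ℝ) 1, dist x p = l * dist x y ∧ dist y p = (1 - l) * dist x y := by
  obtain ⟨a, b, γ, hab, rfl, rfl, hγ, rfl, hd⟩ := h.exists_isometricOn
  obtain ⟨t, ht, rfl⟩ := hp
  have hba : 0 < b - a := hd ▸ dist_pos.2 hxy
  refine ⟨(t - a) / (b - a), ⟨by have := ht.1; positivity,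
    (div_le_one hba).2 (by linarith [ht.2])⟩, ?_, ?_⟩
  · rw [hγ.dist_eq_sub (left_mem_Icc.2 hab) ht ht.1, hd, div_mul_cancel₀ _ hba.ne']
  · rw [dist_comm, hγ.dist_eq_sub ht (right_mem_Icc.2 hab) ht.2, hd]
    field_simp
    ring

end IsGeodesicSegment

namespace IsWHyperbolic

variable {X : Type*} [MetricSpace X] {W : X → X → ℝ → X} {S : Set X} {x y z : X} {l : ℝ}

lemma dist_apply (hW : IsWHyperbolic W) (x y : X) (hl : l ∈ Icc (0 : ℝ) 1) :
    dist x (W x y l) = l * dist x y ∧ dist y (W x y l) = (1 - l) * dist x y := by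
  have hx : dist x (W x y l) ≤ l * dist x y := by
    simpa only [dist_self, mul_zero, zero_add] using hW.1 x y x l hl
  have hy : dist y (W x y l) ≤ (1 - l) * dist x y := by
    simpa only [dist_self, mul_zero, add_zero, dist_comm y x] using hW.1 x y y l hl
  have htri : dist x y ≤ dist x (W x y l) + dist y (W x y l) := dist_triangle_right _ _ _
  constructor <;> linarith

lemma apply_zero (hW : IsWHyperbolic W) (x y : X) : W x y 0 = x := by
  have h := (hW.dist_apply x y (left_mem_Icc.2 zero_le_one)).1
  rw [zero_mul] at h
  exact (dist_eq_zero.1 h).symm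

lemma apply_one (hW : IsWHyperbolic W) (x y : X) : W x y 1 = y := by
  have h := (hW.dist_apply x y (right_mem_Icc.2 zero_le_one)).2
  rw [sub_self, zero_mul] at h
  exact (dist_eq_zero.1 h).symm

lemma isGeodesicSegment_image (hW : IsWHyperbolic W) (hxy : x ≠ y) :
    IsGeodesicSegment (W x y '' Icc 0 1) x y := by
  have hd : 0 < dist x y := dist_pos.2 hxy
  have hscale : (· * (dist x y)⁻¹) '' Icc 0 (dist x y) = Icc 0 1 := by
    rw [image_mul_right_Icc' _ _ (inv_pos.2 hd), zero_mul, mul_inv_cancel₀ hd.ne']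
  refine ⟨0, dist x y, fun s => W x y (s * (dist x y)⁻¹), hd.le, ?_, ?_, ?_, ?_⟩
  · simp only [zero_mul, hW.apply_zero]
  · simp only [mul_inv_cancel₀ hd.ne', hW.apply_one]
  · intro s hs t ht
    rw [hW.2.1 x y _ (hscale ▸ mem_image_of_mem _ hs) _ (hscale ▸ mem_image_of_mem _ ht),
      ← sub_mul, abs_mul, abs_inv, abs_of_pos hd, mul_assoc, inv_mul_cancel₀ hd.ne', mul_one]
  · rw [← hscale, image_image]

lemma eq_apply_of_dist_eq (hW : IsWHyperbolic W)
    (hconv : ∀ l ∈ Ioo (0 : ℝ) 1, ∀ z : X,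
      dist x z = l * dist x y → dist y z = (1 - l) * dist x y → z = W x y l)
    (hl : l ∈ Icc (0 : ℝ) 1) (hxz : dist x z = l * dist x y)
    (hyz : dist y z = (1 - l) * dist x y) : z = W x y l := by
  rcases hl.1.eq_or_lt with rfl | hl₀
  · rw [zero_mul, dist_eq_zero] at hxz
    rw [← hxz, hW.apply_zero]
  rcases hl.2.eq_or_lt with rfl | hl₁
  · rw [sub_self, zero_mul, dist_eq_zero] at hyz
    rw [← hyz, hW.apply_one]
  exact hconv l ⟨hl₀, hl₁⟩ z hxz hyz

lemma eq_image_of_isGeodesicSegment (hW : IsWHyperbolic W) (hxy : x ≠ y)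
    (hconv : ∀ l ∈ Ioo (0 : ℝ) 1, ∀ z : X,
      dist x z = l * dist x y → dist y z = (1 - l) * dist x y → z = W x y l)
    (hS : IsGeodesicSegment S x y) : S = W x y '' Icc 0 1 := by
  apply Subset.antisymm
  · intro p hp
    obtain ⟨l, hl, hxp, hyp⟩ := hS.exists_dist_eq_of_mem hxy hp
    exact ⟨l, hl, (hW.eq_apply_of_dist_eq hconv hl hxp hyp).symm⟩
  · rintro _ ⟨l, hl, rfl⟩
    obtain ⟨p, hp, hxp, hyp⟩ := hS.exists_mem_dist_eq hl
    rwa [← hW.eq_apply_of_dist_eq hconv hl hxp hyp]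

lemma eq_apply_of_existsUnique (hW : IsWHyperbolic W) (huniq : ∃! S, IsGeodesicSegment S x y)
    (hxy : x ≠ y) (hl : l ∈ Ioo (0 : ℝ) 1) (hxz : dist x z = l * dist x y)
    (hyz : dist y z = (1 - l) * dist x y) : z = W x y l := by
  have hd : 0 < dist x y := dist_pos.2 hxy
  have hxz' : x ≠ z := dist_pos.1 (hxz ▸ mul_pos hl.1 hd)
  have hzy : z ≠ y := (dist_pos.1 (hyz ▸ mul_pos (sub_pos.2 hl.2) hd)).symm
  have hS := (hW.isGeodesicSegment_image hxz').union (hW.isGeodesicSegment_image hzy)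
    (by rw [hxz, dist_comm z y, hyz]; ring)
  have hz : z ∈ W x y '' Icc 0 1 := by
    rw [← huniq.unique hS (hW.isGeodesicSegment_image hxy)]
    exact Or.inl ⟨1, right_mem_Icc.2 zero_le_one, hW.apply_one x z⟩
  obtain ⟨l', hl', rfl⟩ := hz
  have hl'l : l' * dist x y = l * dist x y := (hW.dist_apply x y hl').1 ▸ hxz
  rw [mul_right_cancel₀ hd.ne' hl'l]

end IsWHyperbolic

theorem stmt6 {X : Type*} [MetricSpace X] (W : X → X → ℝ → X)
    (hW : IsWHyperbolic W) :
    (∀ x y : X, x ≠ y → ∃! S : Set X, IsGeodesicSegment S x y) ↔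
    (∀ x y : X, x ≠ y → ∀ l ∈ Set.Ioo (0:ℝ) 1, ∀ z : X,
      dist x z = l * dist x y → dist y z = (1 - l) * dist x y → z = W x y l) :=
  ⟨fun huniq x y hxy _ hl _ => hW.eq_apply_of_existsUnique (huniq x y hxy) hxy hl,
    fun hconv x y hxy => ⟨_, hW.isGeodesicSegment_image hxy,
      fun _ hS => hW.eq_image_of_isGeodesicSegment hxy (hconv x y hxy) hS⟩⟩
end

section
/- Every uniformly convex W-hyperbolic space is a Busemann space; in particular it is uniquely geodesic. -/
open Metric Set

/-- An affinely reparametrized geodesic on `[a,b]`: a constant path or a geodesic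
precomposed with an affine homeomorphism, i.e. `d(γ s, γ t) = c|s-t|` for some `c ≥ 0`. -/
def AffinelyReparamGeodesic {X : Type*} [MetricSpace X] (γ : ℝ → X) (a b : ℝ) : Prop :=
  ∃ c : ℝ, 0 ≤ c ∧ ∀ s ∈ Set.Icc a b, ∀ t ∈ Set.Icc a b, dist (γ s) (γ t) = c * |s - t|

/-- A Busemann space: a geodesic space in which the distance between any two
affinely reparametrized geodesics is a convex function. -/
def IsBusemann (X : Type*) [MetricSpace X] : Prop :=
  GeodesicSpace X ∧
  ∀ (γ γ' : ℝ → X) (a b c d : ℝ), AffinelyReparamGeodesic γ a b →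
    AffinelyReparamGeodesic γ' c d →
    ConvexOn ℝ (Set.Icc a b ×ˢ Set.Icc c d) (fun p : ℝ × ℝ => dist (γ p.1) (γ' p.2))

/-- Uniform convexity of a W-hyperbolic space. -/
def UniformlyConvexW {X : Type*} [MetricSpace X] (W : X → X → ℝ → X) : Prop :=
  ∀ r > (0:ℝ), ∀ ε ∈ Set.Ioc (0:ℝ) 2, ∃ δ ∈ Set.Ioc (0:ℝ) 1,
    ∀ a x y : X, dist x a ≤ r → dist y a ≤ r → ε * r ≤ dist x y →
      dist (W x y (1/2)) a ≤ (1 - δ) * r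

section Aux
variable {X : Type*} [MetricSpace X] {W : X → X → ℝ → X}

lemma W_zero (hW : IsWHyperbolic W) (x y : X) : W x y 0 = x := by
  have h := hW.1 x y x 0 (by norm_num)
  simp only [sub_zero, one_mul, zero_mul, dist_self, add_zero] at h
  exact (dist_le_zero.mp (by simpa using h)).symm

lemma W_one (hW : IsWHyperbolic W) (x y : X) : W x y 1 = y := by
  have h := hW.1 x y y 1 (by norm_num)
  simp only [sub_self, zero_mul, one_mul, dist_self, zero_add] at h
  exact (dist_le_zero.mp (by simpa using h)).symm

lemma W_self (hW : IsWHyperbolic W) (x : X) {l : ℝ} (hl : l ∈ Set.Icc (0:ℝ) 1) :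
    W x x l = x := by
  have h := hW.1 x x x l hl
  simp only [dist_self, mul_zero, add_zero] at h
  exact (dist_le_zero.mp (by simpa using h)).symm

lemma dist_W_left (hW : IsWHyperbolic W) (x y : X) {l : ℝ} (hl : l ∈ Set.Icc (0:ℝ) 1) :
    dist x (W x y l) = l * dist x y := by
  have h := hW.2.1 x y l hl 0 (by norm_num)
  rw [W_zero hW, sub_zero, abs_of_nonneg hl.1] at h
  rw [dist_comm]; exact h

lemma dist_W_right (hW : IsWHyperbolic W) (x y : X) {l : ℝ} (hl : l ∈ Set.Icc (0:ℝ) 1) :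
    dist (W x y l) y = (1 - l) * dist x y := by
  have h := hW.2.1 x y l hl 1 (by norm_num)
  rw [W_one hW, show |l - (1:ℝ)| = 1 - l from by rw [abs_of_nonpos (by linarith [hl.2])]; ring] at h
  exact h

/-- Key uniqueness lemma from uniform convexity. -/
lemma unique_point (hW : IsWHyperbolic W) (huc : UniformlyConvexW W)
    {x y z : X} {l : ℝ} (hl : l ∈ Set.Icc (0:ℝ) 1)
    (h1 : dist x z = l * dist x y) (h2 : dist z y = (1 - l) * dist x y) :
    z = W x y l := by
  by_cases hxy : x = y
  · subst hxy
    have hz : z = x := by rw [dist_self, mul_zero] at h1; exact (dist_eq_zero.mp h1).symm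
    rw [hz, W_self hW x hl]
  have hD : 0 < dist x y := dist_pos.mpr hxy
  by_cases hl0 : l = 0
  · subst hl0
    have hz : z = x := by rw [zero_mul] at h1; exact (dist_eq_zero.mp h1).symm
    rw [hz, W_zero hW]
  by_cases hl1 : l = 1
  · subst hl1
    have hz : z = y := by rw [sub_self, zero_mul] at h2; exact dist_eq_zero.mp h2
    rw [hz, W_one hW]
  have hl0' : 0 < l := lt_of_le_of_ne hl.1 (Ne.symm hl0)
  have hl1' : l < 1 := lt_of_le_of_ne hl.2 hl1
  by_contra hne
  set z' := W x y l with hz'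
  have hz'1 : dist x z' = l * dist x y := dist_W_left hW x y hl
  have hz'2 : dist z' y = (1 - l) * dist x y := dist_W_right hW x y hl
  set r := l * dist x y with hr
  have hrpos : 0 < r := mul_pos hl0' hD
  have hzz' : 0 < dist z z' := dist_pos.mpr hne
  set ε := dist z z' / r with hε
  have hεmem : ε ∈ Set.Ioc (0:ℝ) 2 := by
    constructor
    · exact div_pos hzz' hrpos
    · rw [div_le_iff₀ hrpos]
      calc dist z z' ≤ dist z x + dist x z' := dist_triangle _ _ _
        _ = 2 * r := by rw [dist_comm z x, h1, hz'1]; ring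
  obtain ⟨δ, hδ, hmain⟩ := huc r hrpos ε hεmem
  have hw1 : dist (W z z' (1/2)) x ≤ (1 - δ) * r := by
    apply hmain x z z'
    · rw [dist_comm, h1]
    · rw [dist_comm, hz'1]
    · rw [hε, div_mul_cancel₀ _ (ne_of_gt hrpos)]
  have hw2 : dist y (W z z' (1/2)) ≤ (1 - l) * dist x y := by
    have h := hW.1 z z' y (1/2) (by norm_num)
    calc dist y (W z z' (1/2)) ≤ (1 - 1/2) * dist y z + (1/2) * dist y z' := h
      _ = (1 - l) * dist x y := by
          rw [dist_comm y z, dist_comm y z', h2, hz'2]; ring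
  have htri : dist x y ≤ dist x (W z z' (1/2)) + dist (W z z' (1/2)) y := dist_triangle _ _ _
  rw [dist_comm x (W z z' (1/2))] at htri
  rw [dist_comm (W z z' (1/2)) y] at htri
  nlinarith [hδ.1, mul_pos hδ.1 hrpos]

lemma affine_param (hW : IsWHyperbolic W) (huc : UniformlyConvexW W)
    {γ : ℝ → X} {a b c : ℝ}
    (hγ : ∀ s ∈ Set.Icc a b, ∀ t ∈ Set.Icc a b, dist (γ s) (γ t) = c * |s - t|)
    {s t l : ℝ} (hs : s ∈ Set.Icc a b) (ht : t ∈ Set.Icc a b) (hl : l ∈ Set.Icc (0:ℝ) 1) :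
    γ ((1 - l) * s + l * t) = W (γ s) (γ t) l := by
  set u := (1 - l) * s + l * t with hu
  have humem : u ∈ Set.Icc a b :=
    ⟨by nlinarith [hs.1, ht.1, hl.1, hl.2], by nlinarith [hs.2, ht.2, hl.1, hl.2]⟩
  have hd : dist (γ s) (γ t) = c * |s - t| := hγ s hs t ht
  apply unique_point hW huc hl
  · rw [hγ s hs u humem, hd, show s - u = l * (s - t) from by rw [hu]; ring,
      abs_mul, abs_of_nonneg hl.1]; ring
  · rw [hγ u humem t ht, hd, show u - t = (1 - l) * (s - t) from by rw [hu]; ring,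
      abs_mul, abs_of_nonneg (by linarith [hl.2] : (0:ℝ) ≤ 1 - l)]; ring

end Aux

section Main
variable {X : Type*} [MetricSpace X] {W : X → X → ℝ → X}

/-- The canonical W-segment is a geodesic segment. -/
lemma geodesic_canonical (hW : IsWHyperbolic W) (x y : X) (hxy : x ≠ y) :
    IsGeodesicSegment ((fun l => W x y l) '' Set.Icc (0:ℝ) 1) x y := by
  set D := dist x y with hDdef
  have hD : 0 < D := dist_pos.mpr hxy
  refine ⟨0, D, fun t => W x y (t / D), hD.le, ?_, ?_, ?_, ?_⟩
  · simp only [zero_div]; exact W_zero hW x y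
  · simp only [div_self hD.ne']; exact W_one hW x y
  · intro s hs t ht
    have hsm : s / D ∈ Set.Icc (0:ℝ) 1 :=
      ⟨div_nonneg hs.1 hD.le, (div_le_one hD).mpr hs.2⟩
    have htm : t / D ∈ Set.Icc (0:ℝ) 1 :=
      ⟨div_nonneg ht.1 hD.le, (div_le_one hD).mpr ht.2⟩
    rw [hW.2.1 x y _ hsm _ htm, show s / D - t / D = (s - t) / D from by ring,
      abs_div, abs_of_pos hD, div_mul_eq_mul_div, ← hDdef, mul_div_assoc,
      div_self hD.ne', mul_one]
  · ext z
    simp only [Set.mem_image]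
    constructor
    · rintro ⟨l, hl, rfl⟩
      exact ⟨l * D, ⟨mul_nonneg hl.1 hD.le, by nlinarith [hl.2]⟩, by
        rw [mul_div_cancel_right₀ _ hD.ne']⟩
    · rintro ⟨t, ht, rfl⟩
      exact ⟨t / D, ⟨div_nonneg ht.1 hD.le, (div_le_one hD).mpr ht.2⟩, rfl⟩

/-- Any geodesic segment joining distinct points equals the canonical W-segment. -/
lemma segment_eq (hW : IsWHyperbolic W) (huc : UniformlyConvexW W)
    {S : Set X} {x y : X} (hxy : x ≠ y) (h : IsGeodesicSegment S x y) :
    S = (fun l => W x y l) '' Set.Icc (0:ℝ) 1 := by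
  obtain ⟨a, b, γ, hab, hx, hy, hiso, hS⟩ := h
  have hD : dist x y = b - a := by
    rw [← hx, ← hy, hiso a ⟨le_refl a, hab⟩ b ⟨hab, le_refl b⟩,
      abs_of_nonpos (by linarith)]; ring
  have hab' : a < b := by
    rcases lt_or_eq_of_le hab with h' | h'
    · exact h'
    · exfalso; apply hxy; apply dist_eq_zero.mp; rw [hD, h']; ring
  have hγ : ∀ s ∈ Set.Icc a b, ∀ t ∈ Set.Icc a b, dist (γ s) (γ t) = 1 * |s - t| := by
    intro s hs t ht; rw [one_mul]; exact hiso s hs t ht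
  have key : ∀ l ∈ Set.Icc (0:ℝ) 1, γ ((1 - l) * a + l * b) = W x y l := by
    intro l hl
    rw [← hx, ← hy]
    exact affine_param hW huc hγ (Set.left_mem_Icc.mpr hab) (Set.right_mem_Icc.mpr hab) hl
  subst hS
  ext z
  simp only [Set.mem_image]
  constructor
  · rintro ⟨t, ht, rfl⟩
    set l := (t - a) / (b - a) with hl
    have hlm : l ∈ Set.Icc (0:ℝ) 1 :=
      ⟨div_nonneg (by linarith [ht.1]) (by linarith),
       (div_le_one (by linarith)).mpr (by linarith [ht.2])⟩
    refine ⟨l, hlm, ?_⟩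
    rw [← key l hlm]
    congr 1
    have h := div_mul_cancel₀ (t - a) (sub_ne_zero.mpr hab'.ne')
    rw [hl]
    linear_combination h
  · rintro ⟨l, hl, rfl⟩
    refine ⟨(1 - l) * a + l * b, ⟨by nlinarith [hl.1, hl.2], by nlinarith [hl.1, hl.2]⟩,
      key l hl⟩

end Main

theorem stmt9 {X : Type*} [MetricSpace X] (W : X → X → ℝ → X)
    (hW : IsWHyperbolic W) (huc : UniformlyConvexW W) :
    IsBusemann X ∧ ∀ x y : X, x ≠ y → ∃! S : Set X, IsGeodesicSegment S x y := by
  have hgeo : GeodesicSpace X := by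
    intro x y
    by_cases hxy : x = y
    · subst hxy
      exact ⟨(fun _ => x) '' Set.Icc (0:ℝ) 0,
        0, 0, fun _ => x, le_refl 0, rfl, rfl, by
          rintro s ⟨hs1, hs2⟩ t ⟨ht1, ht2⟩
          have : s = t := by linarith
          rw [this, dist_self, sub_self, abs_zero], rfl⟩
    · exact ⟨_, geodesic_canonical hW x y hxy⟩
  refine ⟨⟨hgeo, ?_⟩, ?_⟩
  · -- convexity
    rintro γ γ' a b c d ⟨c1, hc1, hγ⟩ ⟨c2, hc2, hγ'⟩
    refine ⟨(convex_Icc a b).prod (convex_Icc c d), ?_⟩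
    intro p hp q hq la mu hla hmu hsum
    obtain ⟨hp1, hp2⟩ := Set.mem_prod.mp hp
    obtain ⟨hq1, hq2⟩ := Set.mem_prod.mp hq
    have hmumem : mu ∈ Set.Icc (0:ℝ) 1 := ⟨hmu, by linarith⟩
    have h1 : (la • p + mu • q).1 = (1 - mu) * p.1 + mu * q.1 := by
      simp only [Prod.fst_add, Prod.smul_fst, smul_eq_mul]
      have : la = 1 - mu := by linarith
      rw [this]
    have h2 : (la • p + mu • q).2 = (1 - mu) * p.2 + mu * q.2 := by
      simp only [Prod.snd_add, Prod.smul_snd, smul_eq_mul]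
      have : la = 1 - mu := by linarith
      rw [this]
    simp only []
    rw [h1, h2, affine_param hW huc hγ hp1 hq1 hmumem,
      affine_param hW huc hγ' hp2 hq2 hmumem]
    calc dist (W (γ p.1) (γ q.1) mu) (W (γ' p.2) (γ' q.2) mu)
        ≤ (1 - mu) * dist (γ p.1) (γ' p.2) + mu * dist (γ q.1) (γ' q.2) :=
          hW.2.2.2 (γ p.1) (γ' p.2) (γ q.1) (γ' q.2) mu hmumem
      _ = la * dist (γ p.1) (γ' p.2) + mu * dist (γ q.1) (γ' q.2) := by
          have : la = 1 - mu := by linarith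
          rw [this]
  · -- uniqueness
    intro x y hxy
    exact ⟨(fun l => W x y l) '' Set.Icc (0:ℝ) 1, geodesic_canonical hW x y hxy,
      fun S hS => segment_eq hW huc hxy hS⟩
end

section
/- Let (X,d) be a metric space, C = C_1 ∪ ... ∪ C_p a union of nonempty subsets of X, and T:C→C nonexpansive with bounded orbits. Suppose that for some z ∈ C the orbit (T^n z) has a unique asymptotic center x_k with respect to each C_k, k=1,...,p. Then one of the points x_1, ..., x_p is a periodic point of T. -/
open Filter

/-- The asymptotic radius `r(y,(u_n)) = limsup_n d(y,u_n)` of a sequence. -/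
noncomputable def asympRadius {X : Type*} [MetricSpace X] (y : X) (u : ℕ → X) : ℝ :=
  Filter.limsup (fun n => dist y (u n)) Filter.atTop

theorem stmt16 {X : Type*} [MetricSpace X]
    (p : ℕ) (hp : 1 ≤ p) (Cs : Fin p → Set X) (hCs : ∀ k, (Cs k).Nonempty)
    (C : Set X) (hC : C = ⋃ k, Cs k)
    (T : X → X) (hTC : Set.MapsTo T C C)
    (hne : ∀ x ∈ C, ∀ y ∈ C, dist (T x) (T y) ≤ dist x y)
    (hbdd : ∀ x ∈ C, Bornology.IsBounded (Set.range fun n : ℕ => T^[n] x))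
    (z : X) (hz : z ∈ C) (xc : Fin p → X)
    -- `xc k` is the unique asymptotic center of the orbit `(T^n z)` w.r.t. `Cs k`
    (hxc : ∀ k, xc k ∈ Cs k ∧
      (∀ y ∈ Cs k, asympRadius (xc k) (fun n => T^[n] z) ≤
        asympRadius y (fun n => T^[n] z)) ∧
      (∀ y ∈ Cs k, asympRadius y (fun n => T^[n] z) =
        asympRadius (xc k) (fun n => T^[n] z) → y = xc k)) :
    ∃ k : Fin p, ∃ m : ℕ, 1 ≤ m ∧ T^[m] (xc k) = xc k := by
  classical
  set u : ℕ → X := fun n => T^[n] z with hu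
  have horbit : ∀ n, u n ∈ C := by
    intro n; induction n with
    | zero => simpa [u] using hz
    | succ n ih =>
        have : u (n+1) = T (u n) := by simp [u, Function.iterate_succ_apply']
        rw [this]; exact hTC ih
  have hxcC : ∀ k, xc k ∈ C := by
    intro k; rw [hC]; exact Set.mem_iUnion.mpr ⟨k, (hxc k).1⟩
  obtain ⟨Rb, hRb⟩ : ∃ r, Set.range u ⊆ Metric.closedBall z r :=
    ((hbdd z hz).subset_closedBall z)
  have hbd : ∀ y : X, IsBoundedUnder (· ≤ ·) atTop (fun n => dist y (u n)) := by
    intro y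
    refine isBoundedUnder_of ⟨dist y z + Rb, fun n => ?_⟩
    have h1 : dist (u n) z ≤ Rb := Metric.mem_closedBall.mp (hRb ⟨n, rfl⟩)
    have h2 := dist_triangle y z (u n)
    have h3 : dist z (u n) = dist (u n) z := dist_comm _ _
    calc dist y (u n) ≤ dist y z + dist z (u n) := h2
      _ ≤ dist y z + Rb := by linarith
  have hcob : ∀ y : X, IsCoboundedUnder (· ≤ ·) atTop (fun n => dist y (u n)) := by
    intro y
    exact IsBoundedUnder.isCoboundedUnder_le
      (isBoundedUnder_of ⟨0, fun n => dist_nonneg⟩)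
  have hcob' : ∀ y : X, IsCoboundedUnder (· ≤ ·) atTop (fun n => dist y (u (n+1))) := by
    intro y
    exact IsBoundedUnder.isCoboundedUnder_le
      (isBoundedUnder_of ⟨0, fun n => dist_nonneg⟩)
  have hkey : ∀ y ∈ C, asympRadius (T y) u ≤ asympRadius y u := by
    intro y hy
    have h1 : asympRadius (T y) u = limsup (fun n => dist (T y) (u (n+1))) atTop := by
      unfold asympRadius
      exact (limsup_nat_add (fun n => dist (T y) (u n)) 1).symm
    rw [h1]
    refine limsup_le_limsup (Filter.Eventually.of_forall fun n => ?_) (hcob' _) (hbd y)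
    show dist (T y) (u (n+1)) ≤ dist y (u n)
    have h2 : u (n+1) = T (u n) := by simp [u, Function.iterate_succ_apply']
    rw [h2]
    exact hne y hy (u n) (horbit n)
  have hgex : ∀ k : Fin p, ∃ j, T (xc k) ∈ Cs j := by
    intro k
    have : T (xc k) ∈ C := hTC (hxcC k)
    rw [hC] at this; exact Set.mem_iUnion.mp this
  choose g hgmem using hgex
  set R : Fin p → ℝ := fun k => asympRadius (xc k) u with hR
  have hmin : ∀ k, R (g k) ≤ asympRadius (T (xc k)) u := fun k =>
    (hxc (g k)).2.1 _ (hgmem k)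
  have hmono : ∀ k, R (g k) ≤ R k := fun k =>
    le_trans (hmin k) (hkey _ (hxcC k))
  have hfix : ∀ k, R (g k) = R k → T (xc k) = xc (g k) := by
    intro k hRk
    refine (hxc (g k)).2.2 _ (hgmem k) ?_
    have h1 : asympRadius (T (xc k)) u ≤ R (g k) := hRk ▸ hkey _ (hxcC k)
    exact le_antisymm h1 (hmin k)
  -- find a cycle of g
  set k0 : Fin p := ⟨0, hp⟩ with hk0
  have : ∃ i j : ℕ, i < j ∧ g^[i] k0 = g^[j] k0 := by
    obtain ⟨i, j, hij, heq⟩ := Finite.exists_ne_map_eq_of_infinite (fun n : ℕ => g^[n] k0)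
    rcases hij.lt_or_gt with h | h
    · exact ⟨i, j, h, heq⟩
    · exact ⟨j, i, h, heq.symm⟩
  obtain ⟨i, j, hij, heq⟩ := this
  set k : Fin p := g^[i] k0 with hk
  set m : ℕ := j - i with hmdef
  have hm : 1 ≤ m := by omega
  have hcycle : g^[m] k = k := by
    have h1 : g^[m] (g^[i] k0) = g^[m + i] k0 := (Function.iterate_add_apply g m i k0).symm
    have h2 : m + i = j := by omega
    rw [hk, h1, h2, ← heq]
  set a : ℕ → ℝ := fun n => R (g^[n] k) with ha
  have hstep : ∀ n, a (n+1) ≤ a n := by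
    intro n
    have : g^[n+1] k = g (g^[n] k) := Function.iterate_succ_apply' g n k
    simp only [ha, this]
    exact hmono _
  have hanti : Antitone a := antitone_nat_of_succ_le hstep
  have ham : a m = a 0 := by simp [ha, hcycle]
  have hconst : ∀ n ≤ m, a n = a 0 := by
    intro n hn
    have h1 : a n ≤ a 0 := hanti (Nat.zero_le n)
    have h2 : a 0 ≤ a n := ham ▸ hanti hn
    linarith
  have hiter : ∀ n ≤ m, T^[n] (xc k) = xc (g^[n] k) := by
    intro n hn
    induction n with
    | zero => simp
    | succ n ih =>
        have hn' : n ≤ m := Nat.le_of_succ_le hn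
        have h1 : T^[n+1] (xc k) = T (T^[n] (xc k)) := Function.iterate_succ_apply' T n (xc k)
        rw [h1, ih hn']
        have hReq : R (g (g^[n] k)) = R (g^[n] k) := by
          have e1 : a (n+1) = a 0 := hconst (n+1) hn
          have e2 : a n = a 0 := hconst n hn'
          have e3 : g^[n+1] k = g (g^[n] k) := Function.iterate_succ_apply' g n k
          have : a (n+1) = a n := by rw [e1, e2]
          simpa [ha, e3] using this
        have := hfix (g^[n] k) hReq
        rw [this, ← Function.iterate_succ_apply' g n k]
  refine ⟨k, m, hm, ?_⟩
  rw [hiter m le_rfl, hcycle]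
end

section
/- Let T:C→C be a λ-firmly nonexpansive mapping on a subset C of a W-hyperbolic space, with λ ∈ (0,1). Then for all x, y ∈ C: d(Tx,Ty) ≤ ((1-λ)/(1+λ))·d(x,y) + (λ/(1+λ))·(d(Tx,y) + d(x,Ty)). -/
open Metric Set

/-! Firm nonexpansiveness gives `d(Tx,Ty) ≤ d(W(x,Tx,λ), W(y,Ty,λ))`. Expanding the right-hand side
by (W1) twice, once in each argument, bounds it by
`(1-λ)² d(x,y) + λ(1-λ)(d(Tx,y) + d(x,Ty)) + λ² d(Tx,Ty)`; moving the last term to the left and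
dividing by `1 - λ² = (1-λ)(1+λ)` gives the claim. -/

theorem IsWHyperbolic.dist_convex_convex_le {X : Type*} [MetricSpace X] {W : X → X → ℝ → X}
    (hW : IsWHyperbolic W) {l : ℝ} (hl : l ∈ Icc (0:ℝ) 1) (x z y w : X) :
    dist (W x z l) (W y w l) ≤
      (1 - l) ^ 2 * dist x y + l * (1 - l) * (dist z y + dist x w) + l ^ 2 * dist z w := by
  have h1l : 0 ≤ 1 - l := sub_nonneg.2 hl.2
  have hp : ∀ p, dist p (W x z l) ≤ (1 - l) * dist x p + l * dist z p := fun p ↦ by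
    simpa only [dist_comm p] using hW.1 x z p l hl
  calc dist (W x z l) (W y w l)
      ≤ (1 - l) * dist y (W x z l) + l * dist w (W x z l) := by
        simpa only [dist_comm (W x z l)] using hW.1 y w (W x z l) l hl
    _ ≤ (1 - l) * ((1 - l) * dist x y + l * dist z y) +
          l * ((1 - l) * dist x w + l * dist z w) := by
        gcongr
        exacts [hp y, hl.1, hp w]
    _ = _ := by ring

theorem le_of_le_sq_mul_add {a b c l : ℝ} (hl : l ∈ Ioo (0:ℝ) 1)
    (h : a ≤ (1 - l) ^ 2 * b + l * (1 - l) * c + l ^ 2 * a) :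
    a ≤ (1 - l) / (1 + l) * b + l / (1 + l) * c := by
  obtain ⟨hl0, hl1⟩ := hl
  have h1l : 0 < 1 - l := sub_pos.2 hl1
  rw [div_mul_eq_mul_div, div_mul_eq_mul_div, ← add_div, le_div_iff₀ (by linarith)]
  refine le_of_mul_le_mul_left ?_ h1l
  nlinarith

theorem stmt18_general {X : Type*} [MetricSpace X] (W : X → X → ℝ → X)
    (hW : IsWHyperbolic W) (C : Set X) (T : X → X) (l : ℝ) (hl : l ∈ Set.Ioo (0:ℝ) 1)
    (hT : ∀ x ∈ C, ∀ y ∈ C, dist (T x) (T y) ≤ dist (W x (T x) l) (W y (T y) l)) :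
    ∀ x ∈ C, ∀ y ∈ C,
      dist (T x) (T y) ≤ (1 - l) / (1 + l) * dist x y +
        l / (1 + l) * (dist (T x) y + dist x (T y)) := by
  intro x hx y hy
  exact le_of_le_sq_mul_add hl <|
    (hT x hx y hy).trans (hW.dist_convex_convex_le (Ioo_subset_Icc_self hl) x (T x) y (T y))

theorem stmt18 {X : Type*} [MetricSpace X] (W : X → X → ℝ → X)
    (hW : IsWHyperbolic W) (C : Set X) (T : X → X) (l : ℝ) (hl : l ∈ Set.Ioo (0:ℝ) 1)
    (hTC : Set.MapsTo T C C)
    (hT : ∀ x ∈ C, ∀ y ∈ C, dist (T x) (T y) ≤ dist (W x (T x) l) (W y (T y) l)) :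
    ∀ x ∈ C, ∀ y ∈ C,
      dist (T x) (T y) ≤ (1 - l) / (1 + l) * dist x y +
        l / (1 + l) * (dist (T x) y + dist x (T y)) :=
  stmt18_general W hW C T l hl hT
end
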